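/- Let q>2 be real and set a(x) = ((q−1)e^x − e^{2x})/(e^x+q−1)³ for x≥0. Let r∈ℝ and 0<b<c<∞, let φ∈C²([b,c]) be nonnegative, and assume that w↦w·φ'(w) is nonnegative and nondecreasing on [b,c]. Define Φ(t) = ∫_{bt}^{ct} x^r · e^{−φ(x/t)} · a(x) dx for t>0. Then there is exactly one t_0∈(0,∞) such that Φ(t_0)=0. -/

import Mathlib

/-!
Substituting `x = t w` gives `Φ(t) = t^(r+1) G(t)` with `G(t) = ∫_b^c w^r e^(-φ w) a(t w) dw`.
Since `a` is positive before `x₀ = log (q - 1)` and negative after it, `G(t) > 0` for `t c ≤ x₀`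
and `G(t) < 0` for `t b ≥ x₀`, so `G` has a zero. At a zero `t`, integrating the derivative of
`w^(r+1) e^(-φ w) a(t w)` over `[b, c]` gives
`t G'(t) = [w^(r+1) e^(-φ w) a(t w)]_b^c + ∫_b^c ψ(w) w^r e^(-φ w) a(t w) dw`, `ψ(w) = w φ'(w)`.
The boundary term is negative, and the integral is `≤ 0` because `ψ` is nondecreasing while the
other factor changes sign once, from `+` to `-`, and has integral `G(t) = 0`. Hence every zero of
`G` is a strict down-crossing, and a continuous function with only such zeros has at most one.
-/

open MeasureTheory Filter Topology Set intervalIntegral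

/-- `a(x) = ((q−1)e^x − e^{2x})/(e^x+q−1)³`. -/
noncomputable def afun (q : ℝ) (x : ℝ) : ℝ :=
  ((q - 1) * Real.exp x - Real.exp (2 * x)) / (Real.exp x + q - 1) ^ 3

theorem le_zero_of_deriv_neg_at_zeros {f : ℝ → ℝ} (hf : Continuous f)
    (hderiv : ∀ x, f x = 0 → deriv f x < 0) {u v : ℝ} (hu : f u ≤ 0) (huv : u ≤ v) :
    f v ≤ 0 := by
  refine IsClosed.Icc_subset_of_forall_mem_nhdsWithin (s := {x | f x ≤ 0})
    ((isClosed_le hf continuous_const).inter isClosed_Icc) hu (fun x hx => ?_) ⟨huv, le_rfl⟩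
  rcases (show f x ≤ 0 from hx.1).lt_or_eq with hneg | hzero
  · exact nhdsWithin_le_nhds ((hf.continuousAt.eventually_lt continuousAt_const hneg).mono
      fun y hy => hy.le)
  · filter_upwards [(eventually_nhdsWithin_sign_eq_of_deriv_neg (hderiv x hzero)
      hzero).filter_mono nhdsWithin_le_nhds, self_mem_nhdsWithin] with y hsign hxy
    rw [sign_neg (sub_neg.2 hxy), sign_eq_neg_one_iff] at hsign
    exact hsign.le

theorem subsingleton_zeros_of_deriv_neg_at_zeros {f : ℝ → ℝ} (hf : Continuous f)
    (hderiv : ∀ x, f x = 0 → deriv f x < 0) : {x | f x = 0}.Subsingleton := by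
  intro u hu v hv
  by_contra hne
  wlog huv : u < v generalizing u v
  · exact this hv hu (Ne.symm hne) ((Ne.symm hne).lt_of_le (not_lt.1 huv))
  obtain ⟨y, hsign, hy⟩ := (((eventually_nhdsWithin_sign_eq_of_deriv_neg (hderiv v hv)
    hv).filter_mono nhdsWithin_le_nhds).and (Ioo_mem_nhdsLT huv)).exists
  rw [sign_pos (sub_pos.2 hy.2), sign_eq_one_iff] at hsign
  exact (le_zero_of_deriv_neg_at_zeros hf hderiv hu.le hy.1.le).not_gt hsign

theorem hasDerivAt_integral_mul_comp_mul {g h : ℝ → ℝ} {b c : ℝ}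
    (hg : IntervalIntegrable g volume b c) (hh : ContDiff ℝ 1 h) (t : ℝ) :
    HasDerivAt (fun s => ∫ w in b..c, g w * h (s * w))
      (∫ w in b..c, g w * (w * deriv h (t * w))) t := by
  obtain ⟨M, hM⟩ := ((isCompact_closedBall t 1).prod isCompact_uIcc).exists_bound_of_continuousOn
    (f := fun p : ℝ × ℝ => p.2 * deriv h (p.1 * p.2)) (by fun_prop)
  have hh_mul : ∀ s, Continuous fun w => h (s * w) := fun s => by fun_prop
  have hh'_mul : Continuous fun w => w * deriv h (t * w) := by fun_prop
  refine (hasDerivAt_integral_of_dominated_loc_of_deriv_le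
    (F' := fun s w => g w * (w * deriv h (s * w))) (bound := fun w => ‖g w‖ * M)
    (Metric.closedBall_mem_nhds t one_pos)
    (.of_forall fun s => hg.def'.aestronglyMeasurable.mul (hh_mul s).aestronglyMeasurable)
    (hg.mul_continuousOn (hh_mul t).continuousOn)
    (hg.def'.aestronglyMeasurable.mul hh'_mul.aestronglyMeasurable)
    (.of_forall fun w hw s hs => ?_) (hg.norm.mul_const M) (.of_forall fun w _ s _ => ?_)).2
  · rw [norm_mul]
    exact mul_le_mul_of_nonneg_left (hM (s, w) ⟨hs, uIoc_subset_uIcc hw⟩) (norm_nonneg _)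
  · have := (((hh.differentiable one_ne_zero) (s * w)).hasDerivAt.comp s
      ((hasDerivAt_id s).mul_const w)).const_mul (g w)
    simpa [mul_comm] using this

theorem integral_mul_nonpos_of_monotoneOn {ψ Q : ℝ → ℝ} {b c w₀ : ℝ} (hbc : b ≤ c)
    (hψ : MonotoneOn ψ (Icc b c)) (hQ : ContinuousOn Q (Icc b c)) (hw₀ : w₀ ∈ Icc b c)
    (hQ_left : ∀ w ∈ Ioo b w₀, 0 ≤ Q w) (hQ_right : ∀ w ∈ Ioo w₀ c, Q w ≤ 0)
    (hQ_zero : ∫ w in b..c, Q w = 0) :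
    ∫ w in b..c, ψ w * Q w ≤ 0 := by
  have hQi : IntervalIntegrable Q volume b c := hQ.intervalIntegrable_of_Icc hbc
  have hψi : IntervalIntegrable ψ volume b c := by
    rw [← uIcc_of_le hbc] at hψ
    exact hψ.intervalIntegrable
  calc ∫ w in b..c, ψ w * Q w ≤ ∫ w in b..c, ψ w₀ * Q w := by
        refine integral_mono_on_of_le_Ioo hbc (hψi.mul_continuousOn (by rwa [uIcc_of_le hbc]))
          (hQi.const_mul _) fun w hw => ?_
        rcases lt_trichotomy w w₀ with hlt | rfl | hgt
        · exact mul_le_mul_of_nonneg_right (hψ ⟨hw.1.le, hw.2.le⟩ hw₀ hlt.le)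
            (hQ_left w ⟨hw.1, hlt⟩)
        · exact le_rfl
        · exact mul_le_mul_of_nonpos_right (hψ hw₀ ⟨hw.1.le, hw.2.le⟩ hgt.le)
            (hQ_right w ⟨hgt, hw.2⟩)
    _ = 0 := by rw [intervalIntegral.integral_const_mul, hQ_zero, mul_zero]

theorem afun_eq (q x : ℝ) :
    afun q x = Real.exp x * (q - 1 - Real.exp x) / (Real.exp x + q - 1) ^ 3 := by
  rw [afun, two_mul, Real.exp_add]
  ring

theorem afun_pos_of_lt_log {q x : ℝ} (hq : 1 < q) (hx : x < Real.log (q - 1)) :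
    0 < afun q x := by
  rw [Real.lt_log_iff_exp_lt (by linarith)] at hx
  rw [afun_eq]
  have := Real.exp_pos x
  exact div_pos (mul_pos this (by linarith)) (pow_pos (by linarith) 3)

theorem afun_neg_of_log_lt {q x : ℝ} (hq : 1 < q) (hx : Real.log (q - 1) < x) :
    afun q x < 0 := by
  rw [Real.log_lt_iff_lt_exp (by linarith)] at hx
  rw [afun_eq]
  have := Real.exp_pos x
  exact div_neg_of_neg_of_pos (mul_neg_of_pos_of_neg this (by linarith))
    (pow_pos (by linarith) 3)

theorem contDiff_afun {q : ℝ} (hq : 1 ≤ q) {n : WithTop ℕ∞} : ContDiff ℝ n (afun q) := by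
  unfold afun
  refine ContDiff.div (by fun_prop) (by fun_prop) fun x => pow_ne_zero 3 ?_
  linarith [Real.exp_pos x]

noncomputable def profile (q r b c : ℝ) (φ : ℝ → ℝ) (t : ℝ) : ℝ :=
  ∫ w in b..c, w ^ r * Real.exp (-φ w) * afun q (t * w)

section Profile

variable {q r b c : ℝ} {φ : ℝ → ℝ}

theorem integral_eq_rpow_mul_profile (hb : 0 ≤ b) (hbc : b ≤ c) {t : ℝ} (ht : 0 < t) :
    ∫ x in (b * t)..(c * t), x ^ r * Real.exp (-φ (x / t)) * afun q x
      = t ^ (r + 1) * profile q r b c φ t := by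
  have hsub := integral_comp_mul_right
    (fun x => x ^ r * Real.exp (-φ (x / t)) * afun q x) ht.ne' (a := b) (b := c)
  rw [smul_eq_mul, eq_inv_mul_iff_mul_eq₀ ht.ne'] at hsub
  rw [← hsub, Real.rpow_add_one ht.ne', mul_comm (t ^ r) t, mul_assoc, profile,
    ← intervalIntegral.integral_const_mul (t ^ r)]
  refine congrArg (t * ·) (intervalIntegral.integral_congr fun w hw => ?_)
  rw [uIcc_of_le hbc] at hw
  rw [Real.mul_rpow (hb.trans hw.1) ht.le, mul_div_cancel_right₀ _ ht.ne', mul_comm w t]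
  ring

theorem continuousOn_rpow_mul_exp_neg (hb : 0 < b) (hφ : ContinuousOn φ (Icc b c)) :
    ContinuousOn (fun w => w ^ r * Real.exp (-φ w)) (Icc b c) :=
  (continuousOn_id.rpow_const fun _ hw => Or.inl (hb.trans_le hw.1).ne').mul hφ.neg.rexp

theorem continuousOn_profile_integrand (hq : 1 ≤ q) (hb : 0 < b)
    (hφ : ContinuousOn φ (Icc b c)) (t : ℝ) :
    ContinuousOn (fun w => w ^ r * Real.exp (-φ w) * afun q (t * w)) (Icc b c) :=
  (continuousOn_rpow_mul_exp_neg hb hφ).mul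
    ((contDiff_afun hq (n := 0)).continuous.comp (continuous_const.mul continuous_id)).continuousOn

theorem profile_pos (hq : 1 < q) (hb : 0 < b) (hbc : b < c) (hφ : ContinuousOn φ (Icc b c))
    {t : ℝ} (ht : ∀ w ∈ Ioo b c, t * w < Real.log (q - 1)) : 0 < profile q r b c φ t := by
  refine intervalIntegral_pos_of_pos_on
    ((continuousOn_profile_integrand hq.le hb hφ t).intervalIntegrable_of_Icc hbc.le)
    (fun w hw => mul_pos ?_ (afun_pos_of_lt_log hq (ht w hw))) hbc
  have := hb.trans hw.1
  positivity

theorem profile_neg (hq : 1 < q) (hb : 0 < b) (hbc : b < c) (hφ : ContinuousOn φ (Icc b c))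
    {t : ℝ} (ht : ∀ w ∈ Ioo b c, Real.log (q - 1) < t * w) : profile q r b c φ t < 0 := by
  rw [← neg_pos, profile, ← intervalIntegral.integral_neg]
  refine intervalIntegral_pos_of_pos_on
    ((continuousOn_profile_integrand hq.le hb hφ t).intervalIntegrable_of_Icc hbc.le).neg
    (fun w hw => neg_pos.2 (mul_neg_of_pos_of_neg ?_ (afun_neg_of_log_lt hq (ht w hw)))) hbc
  have := hb.trans hw.1
  positivity

theorem hasDerivAt_profile (hq : 1 ≤ q) (hb : 0 < b) (hbc : b ≤ c)
    (hφ : ContinuousOn φ (Icc b c)) (t : ℝ) :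
    HasDerivAt (profile q r b c φ)
      (∫ w in b..c, w ^ r * Real.exp (-φ w) * (w * deriv (afun q) (t * w))) t :=
  hasDerivAt_integral_mul_comp_mul
    ((continuousOn_rpow_mul_exp_neg hb hφ).intervalIntegrable_of_Icc hbc) (contDiff_afun hq) t

theorem continuous_profile (hq : 1 ≤ q) (hb : 0 < b) (hbc : b ≤ c)
    (hφ : ContinuousOn φ (Icc b c)) : Continuous (profile q r b c φ) :=
  continuous_iff_continuousAt.2 fun t => (hasDerivAt_profile hq hb hbc hφ t).continuousAt

theorem pos_of_profile_eq_zero (hq : 2 < q) (hb : 0 < b) (hbc : b < c)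
    (hφ : ContinuousOn φ (Icc b c)) {t : ℝ} (h : profile q r b c φ t = 0) : 0 < t := by
  by_contra! ht
  refine (profile_pos (by linarith) hb hbc hφ fun w hw => ?_).ne' h
  calc t * w ≤ 0 := mul_nonpos_of_nonpos_of_nonneg ht (hb.trans hw.1).le
    _ < Real.log (q - 1) := Real.log_pos (by linarith)

theorem exists_pos_profile_eq_zero (hq : 2 < q) (hb : 0 < b) (hbc : b < c)
    (hφ : ContinuousOn φ (Icc b c)) : ∃ t, 0 < t ∧ profile q r b c φ t = 0 := by
  set x₀ := Real.log (q - 1)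
  have hx₀ : 0 < x₀ := Real.log_pos (by linarith)
  have hc : 0 < c := hb.trans hbc
  have hsmall : 0 < profile q r b c φ (x₀ / c) :=
    profile_pos (by linarith) hb hbc hφ fun w hw =>
      calc x₀ / c * w < x₀ / c * c := mul_lt_mul_of_pos_left hw.2 (by positivity)
        _ = x₀ := div_mul_cancel₀ _ hc.ne'
  have hlarge : profile q r b c φ (x₀ / b) < 0 :=
    profile_neg (by linarith) hb hbc hφ fun w hw =>
      calc x₀ = x₀ / b * b := (div_mul_cancel₀ _ hb.ne').symm
        _ < x₀ / b * w := mul_lt_mul_of_pos_left hw.1 (by positivity)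
  obtain ⟨t, ht, hzero⟩ := intermediate_value_Ioo' (div_lt_div_of_pos_left hx₀ hb hbc).le
    (continuous_profile (by linarith) hb hbc.le hφ).continuousOn ⟨hlarge, hsmall⟩
  exact ⟨t, (div_pos hx₀ hc).trans ht.1, hzero⟩

theorem profile_by_parts (hq : 1 ≤ q) (hb : 0 < b) (hbc : b ≤ c)
    (hφ : ContinuousOn φ (Icc b c)) (hφd : DifferentiableOn ℝ φ (Ioo b c))
    (hψ : IntervalIntegrable (fun w => w * deriv φ w) volume b c) (t : ℝ) :
    (r + 1) * profile q r b c φ t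
        - (∫ w in b..c, w * deriv φ w * (w ^ r * Real.exp (-φ w) * afun q (t * w)))
        + t * deriv (profile q r b c φ) t
      = c ^ (r + 1) * Real.exp (-φ c) * afun q (t * c)
        - b ^ (r + 1) * Real.exp (-φ b) * afun q (t * b) := by
  set Q := fun w => w ^ r * Real.exp (-φ w) * afun q (t * w)
  set Q' := fun w => w ^ r * Real.exp (-φ w) * (w * deriv (afun q) (t * w))
  have hQ : IntervalIntegrable Q volume b c :=
    (continuousOn_profile_integrand hq hb hφ t).intervalIntegrable_of_Icc hbc
  have hψQ : IntervalIntegrable (fun w => w * deriv φ w * Q w) volume b c :=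
    hψ.mul_continuousOn (by rw [uIcc_of_le hbc]; exact continuousOn_profile_integrand hq hb hφ t)
  have hQ' : IntervalIntegrable Q' volume b c :=
    ((continuousOn_rpow_mul_exp_neg hb hφ).mul (continuousOn_id.mul
      (((contDiff_afun hq).continuous_deriv le_rfl).comp
        (continuous_const.mul continuous_id)).continuousOn)).intervalIntegrable_of_Icc hbc
  rw [(hasDerivAt_profile hq hb hbc hφ t).deriv, profile,
    ← intervalIntegral.integral_const_mul, ← intervalIntegral.integral_const_mul,
    ← intervalIntegral.integral_sub (hQ.const_mul _) hψQ,
    ← intervalIntegral.integral_add ((hQ.const_mul _).sub hψQ) (hQ'.const_mul _)]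
  refine integral_eq_sub_of_hasDerivAt_of_le
    (f := fun w => w ^ (r + 1) * Real.exp (-φ w) * afun q (t * w)) hbc
    (continuousOn_profile_integrand hq hb hφ t) (fun w hw => ?_) ?_
  · have hw₀ : 0 < w := hb.trans hw.1
    have hpow : HasDerivAt (fun w => w ^ (r + 1)) ((r + 1) * w ^ r) w := by
      simpa using Real.hasDerivAt_rpow_const (p := r + 1) (Or.inl hw₀.ne')
    have hexp : HasDerivAt (fun w => Real.exp (-φ w)) (Real.exp (-φ w) * -deriv φ w) w :=
      (hφd.differentiableAt (Ioo_mem_nhds hw.1 hw.2)).hasDerivAt.neg.exp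
    have hafun : HasDerivAt (fun w => afun q (t * w)) (deriv (afun q) (t * w) * t) w :=
      ((contDiff_afun hq).differentiable one_ne_zero (t * w)).hasDerivAt.comp w
        (by simpa using (hasDerivAt_id w).const_mul t)
    refine ((hpow.mul hexp).mul hafun).congr_deriv ?_
    simp only [Q, Q', Pi.mul_apply, Real.rpow_add_one hw₀.ne']
    ring
  · exact ((hQ.const_mul _).sub hψQ).add (hQ'.const_mul _)

theorem deriv_profile_neg_of_eq_zero (hq : 1 < q) (hb : 0 < b) (hbc : b < c)
    (hφ : ContinuousOn φ (Icc b c)) (hφd : DifferentiableOn ℝ φ (Ioo b c))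
    (hψ : MonotoneOn (fun w => w * deriv φ w) (Icc b c)) {t : ℝ} (ht : 0 < t)
    (h : profile q r b c φ t = 0) : deriv (profile q r b c φ) t < 0 := by
  set x₀ := Real.log (q - 1)
  have htb : t * b < x₀ := by
    by_contra! htb
    exact (profile_neg hq hb hbc hφ fun w hw => htb.trans_lt
      (mul_lt_mul_of_pos_left hw.1 ht)).ne h
  have htc : x₀ < t * c := by
    by_contra! htc
    exact (profile_pos hq hb hbc hφ fun w hw =>
      (mul_lt_mul_of_pos_left hw.2 ht).trans_le htc).ne' h
  have hweight : ∀ w ∈ Ioo b c, 0 < w ^ r * Real.exp (-φ w) := fun w hw => by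
    have := hb.trans hw.1
    positivity
  have hbw₀ : b ≤ x₀ / t := (le_div_iff₀' ht).2 htb.le
  have hw₀c : x₀ / t ≤ c := (div_le_iff₀' ht).2 htc.le
  have hψQ : ∫ w in b..c, w * deriv φ w * (w ^ r * Real.exp (-φ w) * afun q (t * w)) ≤ 0 := by
    refine integral_mul_nonpos_of_monotoneOn hbc.le hψ
      (continuousOn_profile_integrand hq.le hb hφ t) ⟨hbw₀, hw₀c⟩ (fun w hw => ?_)
      (fun w hw => ?_) h
    · exact (mul_pos (hweight w ⟨hw.1, hw.2.trans_le hw₀c⟩)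
        (afun_pos_of_lt_log hq ((lt_div_iff₀' ht).1 hw.2))).le
    · exact (mul_neg_of_pos_of_neg (hweight w ⟨hbw₀.trans_lt hw.1, hw.2⟩)
        (afun_neg_of_log_lt hq ((div_lt_iff₀' ht).1 hw.1))).le
  have hc : 0 < c := hb.trans hbc
  have hPc : c ^ (r + 1) * Real.exp (-φ c) * afun q (t * c) < 0 :=
    mul_neg_of_pos_of_neg (by positivity) (afun_neg_of_log_lt hq htc)
  have hPb : 0 < b ^ (r + 1) * Real.exp (-φ b) * afun q (t * b) :=
    mul_pos (by positivity) (afun_pos_of_lt_log hq htb)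
  have hparts := profile_by_parts (r := r) hq.le hb hbc.le hφ hφd (by
    rw [← uIcc_of_le hbc.le] at hψ; exact hψ.intervalIntegrable) t
  rw [h, mul_zero, zero_sub] at hparts
  exact neg_of_mul_neg_right (by linarith) ht.le

end Profile

theorem unique_zero_crossing_compact_general
    (q : ℝ) (hq : 2 < q) (r : ℝ) (b c : ℝ) (hb : 0 < b) (hbc : b < c)
    (φ : ℝ → ℝ) (hφC2 : ContDiffOn ℝ 2 φ (Icc b c))
    (hψmono : MonotoneOn (fun w => w * deriv φ w) (Icc b c)) :
    ∃! t : ℝ, 0 < t ∧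
      (∫ x in (b * t)..(c * t), x ^ r * Real.exp (-(φ (x / t))) * afun q x) = 0 := by
  have hφ : ContinuousOn φ (Icc b c) := hφC2.continuousOn
  have hφd : DifferentiableOn ℝ φ (Ioo b c) :=
    (hφC2.differentiableOn two_ne_zero).mono Ioo_subset_Icc_self
  have hzeros : {t | profile q r b c φ t = 0}.Subsingleton :=
    subsingleton_zeros_of_deriv_neg_at_zeros (continuous_profile (by linarith) hb hbc.le hφ)
      fun t ht => deriv_profile_neg_of_eq_zero (by linarith) hb hbc hφ hφd hψmono
        (pos_of_profile_eq_zero hq hb hbc hφ ht) ht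
  obtain ⟨t₀, ht₀, hzero⟩ := exists_pos_profile_eq_zero (r := r) hq hb hbc hφ
  refine ⟨t₀, ⟨ht₀, ?_⟩, fun t ⟨ht, hΦ⟩ => ?_⟩
  · rw [integral_eq_rpow_mul_profile hb.le hbc.le ht₀, hzero, mul_zero]
  · rw [integral_eq_rpow_mul_profile hb.le hbc.le ht] at hΦ
    exact hzeros ((mul_eq_zero.1 hΦ).resolve_left (Real.rpow_pos_of_pos ht _).ne') hzero

/-- **Unique zero of `Φ`, compactly supported case `0 < b < c < ∞`.** -/
theorem unique_zero_crossing_compact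
    (q : ℝ) (hq : 2 < q) (r : ℝ) (b c : ℝ) (hb : 0 < b) (hbc : b < c)
    (φ : ℝ → ℝ) (hφC2 : ContDiffOn ℝ 2 φ (Icc b c))
    (hφnn : ∀ w ∈ Icc b c, 0 ≤ φ w)
    (hψnn : ∀ w ∈ Icc b c, 0 ≤ w * deriv φ w)
    (hψmono : MonotoneOn (fun w => w * deriv φ w) (Icc b c)) :
    ∃! t : ℝ, 0 < t ∧
      (∫ x in (b * t)..(c * t), x ^ r * Real.exp (-(φ (x / t))) * afun q x) = 0 :=
  unique_zero_crossing_compact_general q hq r b c hb hbc φ hφC2 hψmono
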